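/- arXiv:2309.01201 — 5 statements merged into one kernel-verified Lean document; each statement's English description precedes it below -/
import Mathlib

section
/- Let F : ℝⁿ → ℝ be continuous and strictly convex, and let (S_k)_{k∈ℕ} be a nonincreasing sequence of nonempty compact convex subsets of ℝⁿ (S_{k+1} ⊆ S_k) whose intersection ⋂_k S_k is nonempty. For each k, let x_k be the (unique) minimizer of F over S_k. Then the sequence of optimal values (F(x_k)) is nondecreasing and bounded above by min_{x ∈ ⋂_k S_k} F(x), and the sequence (x_k) converges, with limit equal to the unique minimizer of F over ⋂_k S_k. -/
open Filter

private lemma uniq_min {n : ℕ} {F : (Fin n → ℝ) → ℝ}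
    (hFsc : StrictConvexOn ℝ (Set.univ : Set (Fin n → ℝ)) F)
    {T : Set (Fin n → ℝ)} (hT : Convex ℝ T) {p q : Fin n → ℝ}
    (hp : p ∈ T) (hq : q ∈ T) (hpm : ∀ z ∈ T, F p ≤ F z) (hqm : ∀ z ∈ T, F q ≤ F z) :
    q = p := by
  by_contra h
  have hpq : F p = F q := le_antisymm (hpm q hq) (hqm p hp)
  have hm : (1/2 : ℝ) • q + (1/2 : ℝ) • p ∈ T := hT hq hp (by norm_num) (by norm_num) (by norm_num)
  have := hFsc.2 (Set.mem_univ q) (Set.mem_univ p) h (by norm_num : (0:ℝ) < 1/2)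
    (by norm_num : (0:ℝ) < 1/2) (by norm_num)
  have hlt : F ((1/2 : ℝ) • q + (1/2 : ℝ) • p) < F p := by
    rw [hpq] at this ⊢
    simp only [smul_eq_mul] at this
    linarith
  exact absurd (hpm _ hm) (not_le.mpr hlt)

/-- Convergence of minimizers over a nonincreasing sequence of sets.
If `F` is continuous and strictly convex, `(S k)` is a nonincreasing sequence of nonempty
compact convex sets with nonempty intersection, and `x k` minimizes `F` over `S k`, then
`F (x k)` is nondecreasing and bounded above by the minimum of `F` over `⋂ k, S k`, and
`(x k)` converges to the unique minimizer of `F` over `⋂ k, S k`. -/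
theorem stmt_2 {n : ℕ}
    (F : (Fin n → ℝ) → ℝ) (hFc : Continuous F)
    (hFsc : StrictConvexOn ℝ (Set.univ : Set (Fin n → ℝ)) F)
    (S : ℕ → Set (Fin n → ℝ))
    (hSne : ∀ k, (S k).Nonempty) (hScpt : ∀ k, IsCompact (S k))
    (hSconv : ∀ k, Convex ℝ (S k)) (hSdec : ∀ k, S (k + 1) ⊆ S k)
    (hint : (⋂ k, S k).Nonempty)
    (x : ℕ → (Fin n → ℝ))
    (hx : ∀ k, x k ∈ S k ∧ ∀ z ∈ S k, F (x k) ≤ F z) :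
    Monotone (fun k => F (x k)) ∧
      ∃ p ∈ ⋂ k, S k,
        (∀ z ∈ ⋂ k, S k, F p ≤ F z) ∧
        (∀ q ∈ ⋂ k, S k, (∀ z ∈ ⋂ k, S k, F q ≤ F z) → q = p) ∧
        (∀ k, F (x k) ≤ F p) ∧
        Tendsto x atTop (nhds p) := by
  have hanti : Antitone S := antitone_nat_of_succ_le hSdec
  set T : Set (Fin n → ℝ) := ⋂ k, S k with hT
  have hTsub : ∀ k, T ⊆ S k := fun k => Set.iInter_subset S k
  have hTconv : Convex ℝ T := convex_iInter fun k => hSconv k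
  have hTclosed : IsClosed T := isClosed_iInter fun k => (hScpt k).isClosed
  have hTcpt : IsCompact T := (hScpt 0).of_isClosed_subset hTclosed (hTsub 0)
  obtain ⟨p, hpT, hpmin⟩ := hTcpt.exists_isMinOn hint hFc.continuousOn
  have hpm : ∀ z ∈ T, F p ≤ F z := fun z hz => hpmin hz
  have hmono : Monotone (fun k => F (x k)) := by
    apply monotone_nat_of_le_succ
    intro k
    exact (hx k).2 (x (k+1)) (hSdec k (hx (k+1)).1)
  refine ⟨hmono, p, hpT, hpm, ?_, ?_, ?_⟩
  · exact fun q hq hqm => uniq_min hFsc hTconv hpT hq hpm hqm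
  · intro k
    exact (hx k).2 p (hTsub k hpT)
  · -- convergence
    apply tendsto_of_subseq_tendsto
    intro ns hns
    have hmem0 : ∀ j, x (ns j) ∈ S 0 := fun j => hanti (Nat.zero_le _) (hx (ns j)).1
    obtain ⟨q, hqS0, ms, hms, htend⟩ := (hScpt 0).tendsto_subseq hmem0
    have hqT : q ∈ T := by
      rw [hT, Set.mem_iInter]
      intro k
      refine (hScpt k).isClosed.mem_of_tendsto htend ?_
      filter_upwards [(hns.comp hms.tendsto_atTop).eventually_ge_atTop k] with j hj
      exact hanti hj (hx (ns (ms j))).1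
    have hqle : F q ≤ F p := by
      refine le_of_tendsto (hFc.continuousAt.tendsto.comp htend) ?_
      filter_upwards with j
      exact (hx (ns (ms j))).2 p (hTsub _ hpT)
    have : q = p := uniq_min hFsc hTconv hpT hqT hpm (fun z hz => hqle.trans (hpm z hz))
    exact ⟨ms, this ▸ htend⟩
end

section
/- Let Y ⊆ ℝ^{n_y} be nonempty and compact and let g : ℝⁿ × ℝ^{n_y} → ℝ be continuous. Let (x_k)_{k∈ℕ} be a sequence in ℝⁿ converging to a point p, and let (ŷ_k) be a sequence in Y such that for each k, g(x_k, ŷ_k) = max_{y ∈ Y} g(x_k, y). Suppose that for every k, if g(x_k, ŷ_k) > 0 then g(x_l, ŷ_k) ≤ 0 for all l > k (the maximum violation point is added as a cut that all later iterates satisfy). Then the limit point p is feasible for the semi-infinite constraint: max_{y ∈ Y} g(p, y) ≤ 0. -/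
open Filter

set_option maxHeartbeats 1000000

/-- Feasibility of the limit point of the lower bounding procedure.
Let `Y` be nonempty compact, `g` continuous, `x k → p`, and let `ŷ k ∈ Y` maximize
`g (x k) ·` over `Y`. If whenever `g (x k) (ŷ k) > 0` all later iterates satisfy the cut
`g (x l) (ŷ k) ≤ 0`, then the limit point `p` is feasible: `g p y ≤ 0` for all `y ∈ Y`. -/
theorem stmt_3 {n ny : ℕ}
    (Y : Set (Fin ny → ℝ)) (hYne : Y.Nonempty) (hYcpt : IsCompact Y)
    (g : (Fin n → ℝ) → (Fin ny → ℝ) → ℝ)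
    (hg : Continuous fun q : (Fin n → ℝ) × (Fin ny → ℝ) => g q.1 q.2)
    (x : ℕ → (Fin n → ℝ)) (p : Fin n → ℝ)
    (hxp : Tendsto x atTop (nhds p))
    (yhat : ℕ → (Fin ny → ℝ))
    (hyhat : ∀ k, yhat k ∈ Y ∧ ∀ y ∈ Y, g (x k) y ≤ g (x k) (yhat k))
    (hcut : ∀ k, 0 < g (x k) (yhat k) → ∀ l, k < l → g (x l) (yhat k) ≤ 0) :
    ∀ y ∈ Y, g p y ≤ 0 := by
  intro y₀ hy₀
  by_contra hpos
  push_neg at hpos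
  -- extract convergent subsequence of yhat
  obtain ⟨ystar, hystar, φ, hφ, hyφ⟩ :=
    hYcpt.tendsto_subseq (fun k => (hyhat k).1)
  have hxφ : Tendsto (x ∘ φ) atTop (nhds p) := hxp.comp hφ.tendsto_atTop
  -- g (x (φ j)) (yhat (φ j)) → g p ystar
  have h1 : Tendsto (fun j => g (x (φ j)) (yhat (φ j))) atTop (nhds (g p ystar)) :=
    (hg.tendsto (p, ystar)).comp (hxφ.prodMk_nhds hyφ)
  -- g (x (φ j)) y₀ → g p y₀
  have h2 : Tendsto (fun j => g (x (φ j)) y₀) atTop (nhds (g p y₀)) :=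
    (hg.tendsto (p, y₀)).comp (hxφ.prodMk_nhds tendsto_const_nhds)
  -- limit comparison: g p y₀ ≤ g p ystar
  have hle : g p y₀ ≤ g p ystar :=
    le_of_tendsto_of_tendsto' h2 h1 fun j => (hyhat (φ j)).2 y₀ hy₀
  -- eventually g (x (φ j)) (yhat (φ j)) > 0
  have hev : ∀ᶠ j in atTop, 0 < g (x (φ j)) (yhat (φ j)) := by
    have : ∀ᶠ j in atTop, 0 < g (x (φ j)) y₀ := h2.eventually (eventually_gt_nhds hpos)
    filter_upwards [this] with j hj
    exact lt_of_lt_of_le hj ((hyhat (φ j)).2 y₀ hy₀)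
  -- cut: g (x (φ (j+1))) (yhat (φ j)) ≤ 0 eventually
  have hcut' : ∀ᶠ j in atTop, g (x (φ (j + 1))) (yhat (φ j)) ≤ 0 := by
    filter_upwards [hev] with j hj
    exact hcut (φ j) hj (φ (j + 1)) (hφ (Nat.lt_succ_self j))
  -- limit: g p ystar ≤ 0
  have hxφ' : Tendsto (fun j => x (φ (j + 1))) atTop (nhds p) :=
    hxφ.comp (tendsto_add_atTop_nat 1)
  have h3 : Tendsto (fun j => g (x (φ (j + 1))) (yhat (φ j))) atTop (nhds (g p ystar)) :=
    (hg.tendsto (p, ystar)).comp (hxφ'.prodMk_nhds hyφ)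
  have := le_of_tendsto h3 hcut'
  linarith
end

section
/- Let Y ⊆ ℝ^{n_y} be nonempty and compact and let g : ℝⁿ × ℝ^{n_y} → ℝ be continuous. Let (x_k)_{k∈ℕ} be a sequence in ℝⁿ converging to a point p, and let (ŷ_k) be a sequence in Y such that for each k, g(x_k, ŷ_k) = max_{y ∈ Y} g(x_k, y). Suppose that g(x_k, ŷ_k) > 0 for every k (every iterate is infeasible), and that for every k, g(x_l, ŷ_k) ≤ 0 for all l > k. Then g(x_k, ŷ_k) → 0 as k → ∞ and max_{y ∈ Y} g(p, y) = 0. -/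
open Filter

/-- Vanishing constraint violation.
Let `Y` be nonempty compact, `g` continuous, `x k → p`, and let `ŷ k ∈ Y` maximize
`g (x k) ·` over `Y`. If every iterate is infeasible (`g (x k) (ŷ k) > 0`) and all later
iterates satisfy the cut `g (x l) (ŷ k) ≤ 0` for `l > k`, then `g (x k) (ŷ k) → 0` and
`max_{y ∈ Y} g p y = 0`. -/
theorem stmt_4 {n ny : ℕ}
    (Y : Set (Fin ny → ℝ)) (hYne : Y.Nonempty) (hYcpt : IsCompact Y)
    (g : (Fin n → ℝ) → (Fin ny → ℝ) → ℝ)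
    (hg : Continuous fun q : (Fin n → ℝ) × (Fin ny → ℝ) => g q.1 q.2)
    (x : ℕ → (Fin n → ℝ)) (p : Fin n → ℝ)
    (hxp : Tendsto x atTop (nhds p))
    (yhat : ℕ → (Fin ny → ℝ))
    (hyhat : ∀ k, yhat k ∈ Y ∧ ∀ y ∈ Y, g (x k) y ≤ g (x k) (yhat k))
    (hviol : ∀ k, 0 < g (x k) (yhat k))
    (hcut : ∀ k l, k < l → g (x l) (yhat k) ≤ 0) :
    Tendsto (fun k => g (x k) (yhat k)) atTop (nhds 0) ∧
      IsGreatest ((fun y => g p y) '' Y) 0 := by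
  have hgp : Continuous fun y => g p y := hg.comp (continuous_const.prodMk continuous_id)
  have hpy : ∀ k, g p (yhat k) ≤ 0 := by
    intro k
    have hlim : Tendsto (fun l => g (x l) (yhat k)) atTop (nhds (g p (yhat k))) := by
      have h1 : Tendsto (fun l => (x l, yhat k)) atTop (nhds (p, yhat k)) :=
        hxp.prodMk_nhds tendsto_const_nhds
      exact (hg.tendsto _).comp h1
    exact le_of_tendsto hlim (eventually_atTop.2 ⟨k + 1, fun l hl => hcut k l (by omega)⟩)
  have key : ∀ ns : ℕ → ℕ, Tendsto ns atTop atTop →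
      ∃ ms : ℕ → ℕ,
        Tendsto (fun n => g (x (ns (ms n))) (yhat (ns (ms n)))) atTop (nhds 0) ∧
        ∃ yb ∈ Y, g p yb = 0 := by
    intro ns hns
    obtain ⟨yb, hybY, ms, hms, hconv⟩ :=
      hYcpt.tendsto_subseq (fun k => (hyhat (ns k)).1)
    have hx' : Tendsto (fun m => x (ns (ms m))) atTop (nhds p) :=
      hxp.comp (hns.comp hms.tendsto_atTop)
    have L1 : Tendsto (fun m => g (x (ns (ms m))) (yhat (ns (ms m)))) atTop (nhds (g p yb)) :=
      (hg.tendsto (p, yb)).comp (hx'.prodMk_nhds hconv)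
    have hle : g p yb ≤ 0 :=
      le_of_tendsto ((hgp.tendsto yb).comp hconv) (Eventually.of_forall fun m => hpy _)
    have hge : (0 : ℝ) ≤ g p yb :=
      ge_of_tendsto L1 (Eventually.of_forall fun m => (hviol _).le)
    have h0 : g p yb = 0 := le_antisymm hle hge
    exact ⟨ms, h0 ▸ L1, yb, hybY, h0⟩
  have hmain : Tendsto (fun k => g (x k) (yhat k)) atTop (nhds 0) := by
    apply tendsto_of_subseq_tendsto
    intro ns hns
    obtain ⟨ms, hms, _⟩ := key ns hns
    exact ⟨ms, hms⟩
  refine ⟨hmain, ?_, ?_⟩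
  · obtain ⟨_, _, yb, hybY, h0⟩ := key id tendsto_id
    exact ⟨yb, hybY, h0⟩
  · rintro z ⟨y, hyY, rfl⟩
    have hlim : Tendsto (fun k => g (x k) y) atTop (nhds (g p y)) :=
      (hg.tendsto (p, y)).comp (hxp.prodMk_nhds tendsto_const_nhds)
    exact le_of_tendsto_of_tendsto' hlim hmain fun k => (hyhat k).2 y hyY
end

section
/- Let F : ℝⁿ → ℝ be continuous and strictly convex and let X ⊆ ℝⁿ be nonempty, compact and convex with unique minimizer x* of F over X. Let (A_k), (C_k), (B_k) be sequences of nonempty compact subsets of ℝⁿ with A_k ⊆ C_k ⊆ B_k for every k, where (A_k) is nondecreasing with A_k ⊆ X and the closure of ⋃_k A_k equal to X, and (B_k) is nonincreasing with ⋂_k B_k = X. For each k let z_k be a minimizer of F over C_k. Then z_k → x* as k → ∞; in particular the sequence (z_k) converges. -/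
open Filter

/-- Convergence of the upper bounding iterates to the optimizer.
Let `F` be continuous and strictly convex, `X` nonempty compact convex with unique
minimizer `x*`. Let `A k ⊆ C k ⊆ B k` be nonempty compact sets, `(A k)` nondecreasing
with `A k ⊆ X` and `closure (⋃ k, A k) = X`, `(B k)` nonincreasing with `⋂ k, B k = X`.
If `z k` minimizes `F` over `C k`, then `z k → x*`. -/
theorem stmt_9 {n : ℕ}
    (F : (Fin n → ℝ) → ℝ) (hFc : Continuous F)
    (hFsc : StrictConvexOn ℝ (Set.univ : Set (Fin n → ℝ)) F)
    (X : Set (Fin n → ℝ)) (hXne : X.Nonempty) (hXcpt : IsCompact X) (hXconv : Convex ℝ X)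
    (xstar : Fin n → ℝ) (hxstarX : xstar ∈ X)
    (hxstarmin : ∀ z ∈ X, F xstar ≤ F z)
    (hxstaruniq : ∀ q ∈ X, (∀ z ∈ X, F q ≤ F z) → q = xstar)
    (A C B : ℕ → Set (Fin n → ℝ))
    (hAne : ∀ k, (A k).Nonempty) (hCne : ∀ k, (C k).Nonempty) (hBne : ∀ k, (B k).Nonempty)
    (hAcpt : ∀ k, IsCompact (A k)) (hCcpt : ∀ k, IsCompact (C k)) (hBcpt : ∀ k, IsCompact (B k))
    (hAC : ∀ k, A k ⊆ C k) (hCB : ∀ k, C k ⊆ B k)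
    (hAinc : ∀ k, A k ⊆ A (k + 1)) (hAX : ∀ k, A k ⊆ X)
    (hAdense : closure (⋃ k, A k) = X)
    (hBdec : ∀ k, B (k + 1) ⊆ B k) (hBX : (⋂ k, B k) = X)
    (z : ℕ → (Fin n → ℝ))
    (hz : ∀ k, z k ∈ C k ∧ ∀ w ∈ C k, F (z k) ≤ F w) :
    Tendsto z atTop (nhds xstar) := by
  have hAmono : Monotone A := monotone_nat_of_le_succ (fun k => hAinc k)
  have hBanti : Antitone B := antitone_nat_of_succ_le (fun k => hBdec k)
  have hzB : ∀ k, z k ∈ B k := fun k => hCB k (hz k).1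
  have hzB0 : ∀ k, z k ∈ B 0 := fun k => hBanti (Nat.zero_le k) (hzB k)
  apply tendsto_of_subseq_tendsto
  intro ns hns
  obtain ⟨a, haB0, φ, hφ, hconv⟩ := (hBcpt 0).tendsto_subseq (fun j => hzB0 (ns j))
  refine ⟨φ, ?_⟩
  have hk : Tendsto (fun j => ns (φ j)) atTop atTop := hns.comp hφ.tendsto_atTop
  have haX : a ∈ X := by
    rw [← hBX]
    refine Set.mem_iInter.2 fun m => ?_
    refine (hBcpt m).isClosed.mem_of_tendsto hconv ?_
    filter_upwards [hk.eventually_ge_atTop m] with j hj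
    exact hBanti hj (hzB _)
  have hF : F a ≤ F xstar := by
    by_contra h
    push_neg at h
    have hU : IsOpen {w | F w < F a} := isOpen_lt hFc continuous_const
    have hxcl : xstar ∈ closure (⋃ k, A k) := by rw [hAdense]; exact hxstarX
    obtain ⟨a', ha'U, ha'A⟩ := _root_.mem_closure_iff.1 hxcl _ hU h
    obtain ⟨m, ha'm⟩ := Set.mem_iUnion.1 ha'A
    have hev : ∀ᶠ j in atTop, F (z (ns (φ j))) ≤ F a' := by
      filter_upwards [hk.eventually_ge_atTop m] with j hj
      exact (hz _).2 a' (hAC _ (hAmono hj ha'm))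
    have hlim : Tendsto (fun j => F (z (ns (φ j)))) atTop (nhds (F a)) :=
      (hFc.tendsto a).comp hconv
    exact absurd (lt_of_le_of_lt (le_of_tendsto hlim hev) ha'U) (lt_irrefl _)
  have : a = xstar := hxstaruniq a haX (fun w hw => le_trans hF (hxstarmin w hw))
  rwa [this] at hconv
end

section
/- Let Y ⊆ ℝ^{n_y} be nonempty and compact, let g : ℝⁿ × ℝ^{n_y} → ℝ be continuous, and let ε > 0. Let (z_k)_{k∈ℕ} be a convergent sequence in ℝⁿ, and let (ŷ_k) be a sequence in Y such that for each k, g(z_k, ŷ_k) = max_{y ∈ Y} g(z_k, y). Suppose that for every k, if g(z_k, ŷ_k) > 0 then g(z_l, ŷ_k) ≤ −ε for all l > k (the maximum violation point is added as an ε-restricted cut that all later iterates satisfy). Then there exists a finite index K such that max_{y ∈ Y} g(z_K, y) ≤ 0; that is, a locally feasible point for the semi-infinite constraint is obtained within a finite number of iterations. -/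
open Filter

/-- Finite-time local feasibility of the upper bounding procedure.
Let `Y` be nonempty compact, `g` continuous, `ε > 0`, `(z k)` a convergent sequence and
`ŷ k ∈ Y` a maximizer of `g (z k) ·` over `Y`. If whenever `g (z k) (ŷ k) > 0` all later
iterates satisfy the ε-restricted cut `g (z l) (ŷ k) ≤ -ε`, then there exists a finite
index `K` with `max_{y ∈ Y} g (z K) y ≤ 0`. -/
theorem stmt_10 {n ny : ℕ}
    (Y : Set (Fin ny → ℝ)) (hYne : Y.Nonempty) (hYcpt : IsCompact Y)
    (g : (Fin n → ℝ) → (Fin ny → ℝ) → ℝ)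
    (hg : Continuous fun q : (Fin n → ℝ) × (Fin ny → ℝ) => g q.1 q.2)
    (ε : ℝ) (hε : 0 < ε)
    (z : ℕ → (Fin n → ℝ)) (hzconv : ∃ p, Tendsto z atTop (nhds p))
    (yhat : ℕ → (Fin ny → ℝ))
    (hyhat : ∀ k, yhat k ∈ Y ∧ ∀ y ∈ Y, g (z k) y ≤ g (z k) (yhat k))
    (hcut : ∀ k, 0 < g (z k) (yhat k) → ∀ l, k < l → g (z l) (yhat k) ≤ -ε) :
    ∃ K, ∀ y ∈ Y, g (z K) y ≤ 0 := by
  by_contra hK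
  push_neg at hK
  obtain ⟨p, hp⟩ := hzconv
  -- every iterate violates: g (z k) (yhat k) > 0
  have hpos : ∀ k, 0 < g (z k) (yhat k) := fun k => by
    obtain ⟨y, hy, hgy⟩ := hK k
    exact lt_of_lt_of_le hgy ((hyhat k).2 y hy)
  -- subsequence of yhat converging in Y
  obtain ⟨ystar, hystar, φ, hφ, hconv⟩ :=
    hYcpt.tendsto_subseq (fun k => (hyhat k).1)
  -- for each k, g p (yhat (φ k)) ≤ -ε
  have hcont1 : ∀ y, Continuous fun x => g x y := fun y =>
    hg.comp (continuous_id.prodMk continuous_const)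
  have h1 : ∀ k, g p (yhat (φ k)) ≤ -ε := by
    intro k
    have htend : Tendsto (fun l => g (z (φ l)) (yhat (φ k))) atTop (nhds (g p (yhat (φ k)))) :=
      ((hcont1 (yhat (φ k))).continuousAt.tendsto.comp (hp.comp hφ.tendsto_atTop))
    refine le_of_tendsto htend ?_
    filter_upwards [eventually_gt_atTop k] with l hl
    exact hcut (φ k) (hpos (φ k)) (φ l) (hφ hl)
  -- g p ystar ≤ -ε
  have hcont2 : Continuous (g p) := hg.comp (continuous_const.prodMk continuous_id)
  have h2 : g p ystar ≤ -ε := by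
    have := (hcont2.continuousAt.tendsto.comp hconv)
    exact le_of_tendsto this (Eventually.of_forall h1)
  -- but g p ystar ≥ 0
  have h3 : 0 ≤ g p ystar := by
    have htend : Tendsto (fun k => g (z (φ k)) (yhat (φ k))) atTop (nhds (g p ystar)) := by
      have : Tendsto (fun k => ((z (φ k)), yhat (φ k))) atTop (nhds (p, ystar)) :=
        (hp.comp hφ.tendsto_atTop).prodMk_nhds hconv
      exact hg.continuousAt.tendsto.comp this
    exact le_of_tendsto_of_tendsto' tendsto_const_nhds htend fun k => (hpos (φ k)).le
  linarith
end
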